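/- (Optimality certificate on the unit sphere — Case 1 of Theorem 1.) Let τ ≥ −1, μ > 0, c ∈ ℝ, u_1, …, u_m ∈ ℝⁿ, y_1, …, y_m ∈ {−1, +1}. Let ξ ∈ ℝᵐ satisfy −τ/m ≤ ξ_i ≤ 1/m for all i, set v = ∑_{i=1}^m ξ_i y_i u_i, define β ∈ ℝⁿ componentwise by β_j = max{−μ, min{μ, v_j}}, and set w = v − β. Suppose w ≠ 0 and define x* = w/‖w‖₂. If for every i: (c − y_i⟨u_i, x*⟩ > 0 implies ξ_i = 1/m) and (c − y_i⟨u_i, x*⟩ < 0 implies ξ_i = −τ/m), then x* is a global minimizer of P(x) = μ‖x‖₁ + (1/m)∑_{i=1}^m L_τ(c − y_i⟨u_i, x⟩) over {x ∈ ℝⁿ : ‖x‖₂ ≤ 1}. -/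

import Mathlib

/-!
Weak duality. For every `x`, the pinball loss dominates `ξᵢ`-weighted margins and `|βⱼ| ≤ μ`
bounds `⟪β, x⟫` by `μ‖x‖₁`, so `P(x) ≥ (∑ ξᵢ) c - ⟪w, x⟫`. At `x* = w/‖w‖` both bounds are tight
(complementarity for the loss, `βⱼ wⱼ = μ |wⱼ|` for the clamp), so `P(x*) = (∑ ξᵢ) c - ‖w‖`, and
Cauchy–Schwarz gives `⟪w, x⟫ ≤ ‖w‖` on the unit ball.
-/

open scoped RealInnerProductSpace

noncomputable section

def pinballLoss (τ t : ℝ) : ℝ := if 0 ≤ t then t else -τ * t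

section Pinball

variable {τ s a : ℝ}

theorem mul_le_mul_pinballLoss (h₁ : -τ * s ≤ a) (h₂ : a ≤ s) (t : ℝ) :
    a * t ≤ s * pinballLoss τ t := by
  unfold pinballLoss
  split_ifs with ht
  · exact mul_le_mul_of_nonneg_right h₂ ht
  · nlinarith

theorem mul_pinballLoss_eq {t : ℝ} (hpos : 0 < t → a = s) (hneg : t < 0 → a = -τ * s) :
    s * pinballLoss τ t = a * t := by
  unfold pinballLoss
  rcases lt_trichotomy t 0 with ht | rfl | ht
  · rw [if_neg ht.not_ge, hneg ht]; ring
  · simp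
  · rw [if_pos ht.le, hpos ht]

end Pinball

section Clamp

variable {μ : ℝ}

theorem abs_clamp_le (hμ : 0 ≤ μ) (a : ℝ) : |max (-μ) (min μ a)| ≤ μ :=
  abs_le.mpr ⟨le_max_left _ _, max_le (by linarith) (min_le_left _ _)⟩

theorem clamp_mul_sub_clamp (hμ : 0 ≤ μ) (a : ℝ) :
    max (-μ) (min μ a) * (a - max (-μ) (min μ a)) = μ * |a - max (-μ) (min μ a)| := by
  rcases le_total a (-μ) with h | h
  · rw [min_eq_right (by linarith), max_eq_left h, abs_of_nonpos (by linarith)]; ring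
  rcases le_total a μ with h' | h'
  · rw [min_eq_right h', max_eq_right h, sub_self, abs_zero, mul_zero, mul_zero]
  · rw [min_eq_left h', max_eq_right (by linarith), abs_of_nonneg (by linarith)]

end Clamp

section Objective

variable {ι κ : Type*} [Fintype ι] [Fintype κ]

theorem inner_le_mul_sum_abs {μ : ℝ} {β : EuclideanSpace ℝ ι} (hβ : ∀ j, |β j| ≤ μ)
    (z : EuclideanSpace ℝ ι) : ⟪β, z⟫ ≤ μ * ∑ j, |z j| := by
  rw [PiLp.inner_apply, Finset.mul_sum]
  refine Finset.sum_le_sum fun j _ => ?_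
  calc ⟪β j, z j⟫ = z j * β j := rfl
    _ ≤ |z j * β j| := le_abs_self _
    _ ≤ μ * |z j| := by rw [abs_mul, mul_comm]; gcongr; exact hβ j

theorem inner_eq_mul_sum_abs {μ : ℝ} {β z : EuclideanSpace ℝ ι} (h : ∀ j, β j * z j = μ * |z j|) :
    ⟪β, z⟫ = μ * ∑ j, |z j| := by
  rw [PiLp.inner_apply, Finset.mul_sum]
  exact Finset.sum_congr rfl fun j _ => (mul_comm _ _).trans (h j)

theorem sum_mul_margin_eq (c : ℝ) (ξ y : κ → ℝ) (u : κ → EuclideanSpace ℝ ι)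
    (z : EuclideanSpace ℝ ι) :
    ∑ i, ξ i * (c - y i * ⟪u i, z⟫) = (∑ i, ξ i) * c - ⟪∑ i, ξ i • (y i • u i), z⟫ := by
  simp only [sum_inner, real_inner_smul_left, Finset.sum_mul, ← Finset.sum_sub_distrib]
  exact Finset.sum_congr rfl fun i _ => by ring

def epSVMObjective (τ μ c s : ℝ) (u : κ → EuclideanSpace ℝ ι) (y : κ → ℝ)
    (x : EuclideanSpace ℝ ι) : ℝ :=
  μ * ∑ j, |x j| + s * ∑ i, pinballLoss τ (c - y i * ⟪u i, x⟫)

variable {τ μ c s : ℝ} {u : κ → EuclideanSpace ℝ ι} {y ξ : κ → ℝ} {β : EuclideanSpace ℝ ι}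

theorem dual_le_epSVMObjective (hξ : ∀ i, -τ * s ≤ ξ i ∧ ξ i ≤ s) (hβ : ∀ j, |β j| ≤ μ)
    (z : EuclideanSpace ℝ ι) :
    (∑ i, ξ i) * c - ⟪∑ i, ξ i • (y i • u i) - β, z⟫ ≤ epSVMObjective τ μ c s u y z := by
  have hloss : (∑ i, ξ i) * c - ⟪∑ i, ξ i • (y i • u i), z⟫ ≤
      s * ∑ i, pinballLoss τ (c - y i * ⟪u i, z⟫) := by
    rw [← sum_mul_margin_eq, Finset.mul_sum]
    exact Finset.sum_le_sum fun i _ => mul_le_mul_pinballLoss (hξ i).1 (hξ i).2 _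
  rw [inner_sub_left, epSVMObjective]
  linarith [inner_le_mul_sum_abs hβ z]

theorem epSVMObjective_eq_dual {z : EuclideanSpace ℝ ι} (hβ : ∀ j, β j * z j = μ * |z j|)
    (hcomp : ∀ i, (0 < c - y i * ⟪u i, z⟫ → ξ i = s) ∧ (c - y i * ⟪u i, z⟫ < 0 → ξ i = -τ * s)) :
    epSVMObjective τ μ c s u y z = (∑ i, ξ i) * c - ⟪∑ i, ξ i • (y i • u i) - β, z⟫ := by
  have hloss : s * ∑ i, pinballLoss τ (c - y i * ⟪u i, z⟫) =
      (∑ i, ξ i) * c - ⟪∑ i, ξ i • (y i • u i), z⟫ := by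
    rw [← sum_mul_margin_eq, Finset.mul_sum]
    exact Finset.sum_congr rfl fun i _ => mul_pinballLoss_eq (hcomp i).1 (hcomp i).2
  rw [epSVMObjective, hloss, inner_sub_left, real_inner_comm, inner_eq_mul_sum_abs hβ]
  ring

end Objective

theorem inner_inv_norm_smul_self {E : Type*} [NormedAddCommGroup E] [InnerProductSpace ℝ E]
    (w : E) : ⟪w, ‖w‖⁻¹ • w⟫ = ‖w‖ := by
  rw [real_inner_smul_right, real_inner_self_eq_norm_sq]
  rcases eq_or_ne ‖w‖ 0 with h | h
  · simp [h]
  · field_simp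

end

theorem epSVM_sphere_optimality_general {n m : ℕ} (τ μ c : ℝ) (hμ : 0 < μ)
    (u : Fin m → EuclideanSpace ℝ (Fin n)) (y : Fin m → ℝ)
    (L : ℝ → ℝ) (hL : L = fun t => if 0 ≤ t then t else -τ * t)
    (ξ : Fin m → ℝ) (hξ : ∀ i, -τ / (m : ℝ) ≤ ξ i ∧ ξ i ≤ 1 / (m : ℝ))
    (v β w : EuclideanSpace ℝ (Fin n))
    (hv : v = ∑ i : Fin m, ξ i • (y i • u i))
    (hβ : ∀ j, β j = max (-μ) (min μ (v j)))
    (hw : w = v - β)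
    (xstar : EuclideanSpace ℝ (Fin n)) (hxstar : xstar = ‖w‖⁻¹ • w)
    (hcomp : ∀ i, (0 < c - y i * ⟪u i, xstar⟫ → ξ i = 1 / (m : ℝ)) ∧
                  (c - y i * ⟪u i, xstar⟫ < 0 → ξ i = -τ / (m : ℝ))) :
    ∀ x : EuclideanSpace ℝ (Fin n), ‖x‖ ≤ 1 →
      μ * (∑ j : Fin n, |xstar j|) +
          (1 / (m : ℝ)) * ∑ i : Fin m, L (c - y i * ⟪u i, xstar⟫) ≤
        μ * (∑ j : Fin n, |x j|) +
          (1 / (m : ℝ)) * ∑ i : Fin m, L (c - y i * ⟪u i, x⟫) := by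
  intro x hx
  subst hL
  have hdiv : -τ / (m : ℝ) = -τ * (1 / m) := by ring
  rw [hdiv] at hξ hcomp
  have hβμ : ∀ j, |β j| ≤ μ := fun j => by rw [hβ]; exact abs_clamp_le hμ.le (v j)
  have hβx : ∀ j, β j * xstar j = μ * |xstar j| := fun j => by
    have hclamp := clamp_mul_sub_clamp hμ.le (v j)
    rw [← hβ j] at hclamp
    have hxj : xstar j = ‖w‖⁻¹ * (v j - β j) := by rw [hxstar, hw]; rfl
    rw [hxj, abs_mul, abs_of_nonneg (inv_nonneg.2 (norm_nonneg w))]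
    linear_combination ‖w‖⁻¹ * hclamp
  have hopt := epSVMObjective_eq_dual hβx hcomp
  have hlow := dual_le_epSVMObjective (c := c) (u := u) (y := y) hξ hβμ x
  rw [← hv, ← hw] at hopt hlow
  have hwx : ⟪w, xstar⟫ = ‖w‖ := hxstar ▸ inner_inv_norm_smul_self w
  have hcs : ⟪w, x⟫ ≤ ‖w‖ :=
    (real_inner_le_norm w x).trans (mul_le_of_le_one_right (norm_nonneg w) hx)
  change epSVMObjective τ μ c (1 / m) u y xstar ≤ epSVMObjective τ μ c (1 / m) u y x
  linarith

/-- Case 1 of Theorem 1: optimality certificate on the unit sphere. With `v = ∑ ξ_i y_i u_i`,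
`β` the componentwise clamp of `v` to `[-μ, μ]`, `w = v - β ≠ 0` and `x* = w/‖w‖`, the
complementarity conditions on `ξ` imply that `x*` globally minimizes the ep-SVM objective
over the unit ball. -/
theorem epSVM_sphere_optimality {n m : ℕ} (hm : 0 < m) (τ μ c : ℝ) (hτ : -1 ≤ τ) (hμ : 0 < μ)
    (u : Fin m → EuclideanSpace ℝ (Fin n)) (y : Fin m → ℝ)
    (hy : ∀ i, y i = 1 ∨ y i = -1)
    (L : ℝ → ℝ) (hL : L = fun t => if 0 ≤ t then t else -τ * t)
    (ξ : Fin m → ℝ) (hξ : ∀ i, -τ / (m : ℝ) ≤ ξ i ∧ ξ i ≤ 1 / (m : ℝ))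
    (v β w : EuclideanSpace ℝ (Fin n))
    (hv : v = ∑ i : Fin m, ξ i • (y i • u i))
    (hβ : ∀ j, β j = max (-μ) (min μ (v j)))
    (hw : w = v - β) (hw0 : w ≠ 0)
    (xstar : EuclideanSpace ℝ (Fin n)) (hxstar : xstar = ‖w‖⁻¹ • w)
    (hcomp : ∀ i, (0 < c - y i * ⟪u i, xstar⟫ → ξ i = 1 / (m : ℝ)) ∧
                  (c - y i * ⟪u i, xstar⟫ < 0 → ξ i = -τ / (m : ℝ))) :
    ∀ x : EuclideanSpace ℝ (Fin n), ‖x‖ ≤ 1 →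
      μ * (∑ j : Fin n, |xstar j|) +
          (1 / (m : ℝ)) * ∑ i : Fin m, L (c - y i * ⟪u i, xstar⟫) ≤
        μ * (∑ j : Fin n, |x j|) +
          (1 / (m : ℝ)) * ∑ i : Fin m, L (c - y i * ⟪u i, x⟫) :=
  epSVM_sphere_optimality_general τ μ c hμ u y L hL ξ hξ v β w hv hβ hw xstar hxstar hcomp
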